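/- Let a₂ ∈ ℝ, b ∈ ℝ, c > 0, and consider ψ(z₂, x₂) = a₂z₂ + b·x₂ + c·x₂²/z₂ over z₂ ∈ [0,1], x₂ ≥ 0 (with conventions 0/0 = 0 and a/0 = ∞ for a > 0). If ψ attains a minimum, then it attains a minimum at a point with z₂ ∈ {0,1}. -/

import Mathlib

/-- Division with the convention `a/0 = ∞` if `a > 0` and `0/0 = 0`. -/
noncomputable def pdiv (a b : ℝ) : EReal :=
  if 0 < b then ((a / b : ℝ) : EReal) else if 0 < a then ⊤ else 0

/-!
If the minimum is attained at `(z, x)` with `0 < z < 1`, call its (finite) value `m`.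
Comparing with `(0, 0)`, where `ψ` vanishes, gives `m ≤ 0`. Since `ψ` is positively
homogeneous on `z > 0`, the feasible point `(1, x / z)` has value `m / z`, so `m ≤ m / z`.
As `1 / z > 1`, the two inequalities force `m = 0`, and then `(0, 0)` is also a minimiser.
-/

lemma pdiv_of_pos (a : ℝ) {b : ℝ} (hb : 0 < b) : pdiv a b = ((a / b : ℝ) : EReal) := by
  rw [pdiv, if_pos hb]

lemma pdiv_zero_left (b : ℝ) : pdiv 0 b = 0 := by
  simp [pdiv]

lemma coe_add_mul_pdiv_of_pos (a₂ b c x : ℝ) {z : ℝ} (hz : 0 < z) :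
    ((a₂ * z + b * x : ℝ) : EReal) + (c : EReal) * pdiv (x ^ 2) z =
      ((a₂ * z + b * x + c * (x ^ 2 / z) : ℝ) : EReal) := by
  rw [pdiv_of_pos _ hz]
  norm_cast

lemma perspective_smul (a₂ b c x : ℝ) {z γ : ℝ} (hz : 0 < z) (hγ : 0 < γ) :
    a₂ * (γ * z) + b * (γ * x) + c * ((γ * x) ^ 2 / (γ * z)) =
      γ * (a₂ * z + b * x + c * (x ^ 2 / z)) := by
  field_simp

lemma eq_zero_of_nonpos_of_le_mul {m γ : ℝ} (hm : m ≤ 0) (hγ : 1 < γ) (h : m ≤ γ * m) :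
    m = 0 := by
  nlinarith

theorem min_attained_at_binary_z_general (a₂ b c : ℝ)
    (ψ : ℝ → ℝ → EReal)
    (hψ : ∀ z₂ x₂ : ℝ, ψ z₂ x₂ = ((a₂ * z₂ + b * x₂ : ℝ) : EReal) + (c : EReal) * pdiv (x₂^2) z₂)
    (hmin : ∃ z₂ x₂ : ℝ, z₂ ∈ Set.Icc (0:ℝ) 1 ∧ 0 ≤ x₂ ∧
      ∀ w₂ u₂ : ℝ, w₂ ∈ Set.Icc (0:ℝ) 1 → 0 ≤ u₂ → ψ z₂ x₂ ≤ ψ w₂ u₂) :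
    ∃ z₂ x₂ : ℝ, z₂ ∈ Set.Icc (0:ℝ) 1 ∧ 0 ≤ x₂ ∧ (z₂ = 0 ∨ z₂ = 1) ∧
      ∀ w₂ u₂ : ℝ, w₂ ∈ Set.Icc (0:ℝ) 1 → 0 ≤ u₂ → ψ z₂ x₂ ≤ ψ w₂ u₂ := by
  obtain ⟨z, x, hz, hx, hopt⟩ := hmin
  rcases hz.1.eq_or_lt with rfl | hz0
  · exact ⟨0, x, hz, hx, Or.inl rfl, hopt⟩
  rcases hz.2.eq_or_lt with rfl | hz1
  · exact ⟨1, x, hz, hx, Or.inr rfl, hopt⟩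
  set m := a₂ * z + b * x + c * (x ^ 2 / z)
  have hψ_min : ψ z x = m := by rw [hψ, coe_add_mul_pdiv_of_pos _ _ _ _ hz0]
  have hψ_origin : ψ 0 0 = 0 := by simp [hψ, pdiv_zero_left]
  have hψ_scaled : ψ 1 (z⁻¹ * x) = ((z⁻¹ * m : ℝ) : EReal) := by
    rw [hψ, coe_add_mul_pdiv_of_pos _ _ _ _ one_pos, ← inv_mul_cancel₀ hz0.ne',
      perspective_smul _ _ _ _ hz0 (inv_pos.mpr hz0)]
  have hm_nonpos : m ≤ 0 := by
    simpa [hψ_min, hψ_origin] using hopt 0 0 (by simp) le_rfl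
  have hm_le_scaled : m ≤ z⁻¹ * m := by
    have h := hopt 1 (z⁻¹ * x) (by simp) (mul_nonneg (inv_nonneg.mpr hz0.le) hx)
    rwa [hψ_min, hψ_scaled, EReal.coe_le_coe_iff] at h
  have hm : m = 0 :=
    eq_zero_of_nonpos_of_le_mul hm_nonpos ((one_lt_inv₀ hz0).mpr hz1) hm_le_scaled
  refine ⟨0, 0, by simp, le_rfl, Or.inl rfl, fun w u hw hu => ?_⟩
  rw [hψ_origin, ← EReal.coe_zero, ← hm, ← hψ_min]
  exact hopt w u hw hu

/-- Scaling lemma: if `ψ(z₂,x₂) = a₂z₂ + bx₂ + c·x₂²/z₂` attains a minimum over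
`[0,1] × ℝ₊`, then it attains a minimum at a point with `z₂ ∈ {0,1}`. -/
theorem min_attained_at_binary_z (a₂ b c : ℝ) (hc : 0 < c)
    (ψ : ℝ → ℝ → EReal)
    (hψ : ∀ z₂ x₂ : ℝ, ψ z₂ x₂ = ((a₂ * z₂ + b * x₂ : ℝ) : EReal) + (c : EReal) * pdiv (x₂^2) z₂)
    (hmin : ∃ z₂ x₂ : ℝ, z₂ ∈ Set.Icc (0:ℝ) 1 ∧ 0 ≤ x₂ ∧
      ∀ w₂ u₂ : ℝ, w₂ ∈ Set.Icc (0:ℝ) 1 → 0 ≤ u₂ → ψ z₂ x₂ ≤ ψ w₂ u₂) :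
    ∃ z₂ x₂ : ℝ, z₂ ∈ Set.Icc (0:ℝ) 1 ∧ 0 ≤ x₂ ∧ (z₂ = 0 ∨ z₂ = 1) ∧
      ∀ w₂ u₂ : ℝ, w₂ ∈ Set.Icc (0:ℝ) 1 → 0 ≤ u₂ → ψ z₂ x₂ ≤ ψ w₂ u₂ :=
  min_attained_at_binary_z_general a₂ b c ψ hψ hmin
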